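/- arXiv:1902.01132 — 3 statements merged into one kernel-verified Lean document; each statement's English description precedes it below -/
import Mathlib

section
/- For integers k ≥ 1 and n ≥ 0, ∫_0^1 [g_n^{(k)}(x)]^2 dx = k^{2(n+1)} (2n)! / ((n!)^2 (2k−1)^{2n+1}). -/
open MeasureTheory Real Set

/-- Density of the n-th value of the k-th record from a standard uniform parent. -/
noncomputable def recg (k n : ℕ) (x : ℝ) : ℝ :=
  (k : ℝ) ^ (n + 1) / (Nat.factorial n) * (-Real.log (1 - x)) ^ n * (1 - x) ^ (k - 1)

theorem stmt2 (k n : ℕ) (hk : 1 ≤ k) :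
    ∫ x in (0:ℝ)..1, (recg k n x) ^ 2 =
      (k : ℝ) ^ (2 * (n + 1)) * (Nat.factorial (2 * n)) /
        ((Nat.factorial n : ℝ) ^ 2 * (2 * (k : ℝ) - 1) ^ (2 * n + 1)) := by
  have hc : (0:ℝ) < 2 * (k:ℝ) - 1 := by
    have : (1:ℝ) ≤ (k:ℝ) := by exact_mod_cast hk
    linarith
  have himg : (fun t : ℝ => 1 - Real.exp (-t)) '' Ioi 0 = Ioo 0 1 := by
    ext y
    constructor
    · rintro ⟨t, ht, rfl⟩
      have h1 : Real.exp (-t) < 1 := Real.exp_lt_one_iff.mpr (by simp only [mem_Ioi] at ht; linarith)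
      have h2 : 0 < Real.exp (-t) := Real.exp_pos _
      have ht2 : (0:ℝ) < t := ht
      exact ⟨show (0:ℝ) < 1 - Real.exp (-t) by linarith,
             show (1:ℝ) - Real.exp (-t) < 1 by linarith⟩
    · rintro ⟨h0, h1⟩
      refine ⟨-Real.log (1 - y), ?_, ?_⟩
      · simp only [mem_Ioi]
        have := Real.log_neg (x := 1 - y) (by linarith) (by linarith)
        linarith
      · show 1 - Real.exp (- -Real.log (1 - y)) = y
        rw [neg_neg, Real.exp_log (by linarith)]; ring
  have hderiv : ∀ t ∈ Ioi (0:ℝ), HasDerivWithinAt (fun t : ℝ => 1 - Real.exp (-t))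
      (Real.exp (-t)) (Ioi 0) t := by
    intro t ht
    have : HasDerivAt (fun t : ℝ => 1 - Real.exp (-t)) (Real.exp (-t)) t := by
      simpa using ((Real.hasDerivAt_exp (-t)).comp t (hasDerivAt_neg t)).const_sub 1
    exact this.hasDerivWithinAt
  have hinj : InjOn (fun t : ℝ => 1 - Real.exp (-t)) (Ioi 0) := by
    intro a _ b _ h
    simp only [sub_right_inj] at h
    have := Real.exp_injective h
    linarith [neg_injective this]
  rw [intervalIntegral.integral_of_le (by norm_num : (0:ℝ) ≤ 1),
    integral_Ioc_eq_integral_Ioo, ← himg,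
    integral_image_eq_integral_abs_deriv_smul measurableSet_Ioi hderiv hinj]
  have heq : ∀ t ∈ Ioi (0:ℝ),
      |Real.exp (-t)| • (recg k n (1 - Real.exp (-t)))^2 =
      ((k : ℝ) ^ (2 * (n + 1)) / ((Nat.factorial n : ℝ)^2)) *
        (t ^ ((2*n+1:ℝ) - 1) * Real.exp (-((2*(k:ℝ)-1) * t))) := by
    intro t ht
    have ht' : (0:ℝ) < t := ht
    have h1 : (1:ℝ) - (1 - Real.exp (-t)) = Real.exp (-t) := by ring
    have hcast : ((k-1 : ℕ) : ℝ) = (k:ℝ) - 1 := by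
      rw [Nat.cast_sub hk]; norm_num
    have e2 : ∀ a : ℝ, Real.exp a ^ 2 = Real.exp (2*a) := fun a => by
      rw [sq, ← Real.exp_add]; ring_nf
    have e3 : Real.exp (-t) * Real.exp (2*(((k:ℝ)-1) * -t)) =
        Real.exp (-((2*(k:ℝ)-1)*t)) := by rw [← Real.exp_add]; congr 1; ring
    rw [abs_of_pos (Real.exp_pos _), smul_eq_mul, recg, h1, Real.log_exp,
      ← Real.exp_nat_mul,
      show ((2*n+1:ℝ) - 1) = ((2*n : ℕ) : ℝ) by push_cast; ring, Real.rpow_natCast,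
      neg_neg, mul_pow, mul_pow, e2, ← pow_mul, hcast, ← e3]
    push_cast
    ring
  rw [setIntegral_congr_fun measurableSet_Ioi heq, integral_const_mul,
    integral_rpow_mul_exp_neg_mul_Ioi (by positivity) hc]
  rw [show (2*(n:ℝ)+1) = ((2*n:ℕ):ℝ) + 1 by push_cast; ring,
    Real.Gamma_nat_eq_factorial,
    show ((2*n:ℕ):ℝ) + 1 = ((2*n+1:ℕ):ℝ) by push_cast; ring, Real.rpow_natCast]
  rw [div_pow, one_pow]
  field_simp
end

section
/- For integers k ≥ 1 and n ≥ 0, the L²(0,1) norm squared of g_n^{(k)} − 1 equals k^{2(n+1)} (2n)! / ((n!)^2 (2k−1)^{2n+1}) − 1, i.e., ∫_0^1 (g_n^{(k)}(x) − 1)^2 dx = k^{2(n+1)}(2n)!/((n!)^2(2k−1)^{2n+1}) − 1. -/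
open MeasureTheory Real

/-!
The substitution `x = 1 - exp (-t)` turns `∫₀¹ (-log (1 - x)) ^ m * (1 - x) ^ p` into the Gamma
integral `∫₀^∞ t ^ m * exp (-(p + 1) * t) = m! / (p + 1) ^ (m + 1)`. With `(m, p) = (n, k - 1)`
this shows that `g = recg k n` integrates to `1`; with `(m, p) = (2n, 2k - 2)` it gives `∫ g²`.
Then `∫ (g - 1)² = ∫ g² - 2 ∫ g + 1 = ∫ g² - 1`.
-/

open Set
open scoped Nat

theorem integral_sub_one_sq {α : Type*} [MeasurableSpace α] {μ : Measure α}
    [IsProbabilityMeasure μ] {f : α → ℝ} (hf : Integrable f μ)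
    (hf2 : Integrable (fun x ↦ f x ^ 2) μ) :
    ∫ x, (f x - 1) ^ 2 ∂μ = ∫ x, f x ^ 2 ∂μ - 2 * ∫ x, f x ∂μ + 1 := by
  have hexpand : (fun x ↦ (f x - 1) ^ 2) = fun x ↦ f x ^ 2 - 2 * f x + 1 := by
    funext x; ring
  have hf2_sub : Integrable (fun x ↦ f x ^ 2 - 2 * f x) μ := hf2.sub (hf.const_mul 2)
  rw [hexpand, integral_add hf2_sub (integrable_const 1), integral_sub hf2 (hf.const_mul 2),
    integral_const_mul, integral_const, probReal_univ, one_smul]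

lemma image_one_sub_exp_neg_Ioi : (fun t ↦ 1 - exp (-t)) '' Ioi 0 = Ioo 0 1 := by
  ext x
  constructor
  · rintro ⟨t, ht, rfl⟩
    have : exp (-t) < 1 := exp_lt_one_iff.mpr (neg_lt_zero.mpr ht)
    exact ⟨by linarith, by linarith [exp_pos (-t)]⟩
  · rintro ⟨hx₀, hx₁⟩
    refine ⟨-log (1 - x), neg_pos.mpr (log_neg (by linarith) (by linarith)), ?_⟩
    simp only [neg_neg, exp_log (sub_pos.mpr hx₁), sub_sub_cancel]

theorem integral_comp_one_sub_exp_neg_Ioi {E : Type*} [NormedAddCommGroup E] [NormedSpace ℝ E]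
    (g : ℝ → E) : ∫ t in Ioi 0, exp (-t) • g (1 - exp (-t)) = ∫ x in Ioo 0 1, g x := by
  have hderiv (t : ℝ) : HasDerivAt (fun t ↦ 1 - exp (-t)) (exp (-t)) t := by
    simpa using ((hasDerivAt_neg t).exp).const_sub 1
  have hinj : InjOn (fun t ↦ 1 - exp (-t)) (Ioi 0) := fun a _ b _ h ↦ by
    simpa using exp_injective (sub_right_injective h)
  rw [← image_one_sub_exp_neg_Ioi, integral_image_eq_integral_abs_deriv_smul measurableSet_Ioi
    (fun t _ ↦ (hderiv t).hasDerivWithinAt) hinj]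
  simp only [abs_of_pos (exp_pos _)]

theorem integral_neg_log_one_sub_pow_mul_one_sub_pow (m p : ℕ) :
    ∫ x in Ioo 0 1, (-log (1 - x)) ^ m * (1 - x) ^ p = (m ! : ℝ) / ((p : ℝ) + 1) ^ (m + 1) := by
  rw [← integral_comp_one_sub_exp_neg_Ioi]
  have hsubst : ∀ t ∈ Ioi (0 : ℝ),
      exp (-t) • ((-log (1 - (1 - exp (-t)))) ^ m * (1 - (1 - exp (-t))) ^ p)
        = t ^ ((m + 1 : ℝ) - 1) * exp (-((p + 1) * t)) := fun t _ ↦ by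
    rw [sub_sub_cancel, log_exp, neg_neg, ← exp_nat_mul, smul_eq_mul, add_sub_cancel_right,
      rpow_natCast, mul_left_comm, ← exp_add]
    congr 2
    ring
  rw [setIntegral_congr_fun measurableSet_Ioi hsubst,
    integral_rpow_mul_exp_neg_mul_Ioi (by positivity) (by positivity),
    Gamma_nat_eq_factorial, ← Nat.cast_add_one m, rpow_natCast, div_pow, one_pow]
  ring

theorem integrableOn_neg_log_one_sub_pow_mul_one_sub_pow (m p : ℕ) :
    IntegrableOn (fun x ↦ (-log (1 - x)) ^ m * (1 - x) ^ p) (Ioo 0 1) :=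
  .of_integral_ne_zero <| by rw [integral_neg_log_one_sub_pow_mul_one_sub_pow]; positivity

lemma recg_eq_mul (k n : ℕ) (x : ℝ) :
    recg k n x = (k : ℝ) ^ (n + 1) / n ! * ((-log (1 - x)) ^ n * (1 - x) ^ (k - 1)) := by
  rw [recg, mul_assoc]

lemma recg_sq_eq_mul (k n : ℕ) (x : ℝ) :
    recg k n x ^ 2 = ((k : ℝ) ^ (n + 1) / n !) ^ 2 *
      ((-log (1 - x)) ^ (2 * n) * (1 - x) ^ (2 * (k - 1))) := by
  rw [recg]; ring

lemma integrableOn_recg (k n : ℕ) : IntegrableOn (recg k n) (Ioo 0 1) := by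
  rw [funext (recg_eq_mul k n)]
  exact (integrableOn_neg_log_one_sub_pow_mul_one_sub_pow n (k - 1)).const_mul _

lemma integrableOn_recg_sq (k n : ℕ) : IntegrableOn (fun x ↦ recg k n x ^ 2) (Ioo 0 1) := by
  simp_rw [recg_sq_eq_mul]
  exact (integrableOn_neg_log_one_sub_pow_mul_one_sub_pow (2 * n) (2 * (k - 1))).const_mul _

theorem integral_recg {k : ℕ} (hk : 1 ≤ k) (n : ℕ) : ∫ x in Ioo 0 1, recg k n x = 1 := by
  simp_rw [recg_eq_mul]
  rw [integral_const_mul, integral_neg_log_one_sub_pow_mul_one_sub_pow, Nat.cast_pred hk,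
    sub_add_cancel]
  have : (k : ℝ) ≠ 0 := by positivity
  field_simp

theorem integral_recg_sq {k : ℕ} (hk : 1 ≤ k) (n : ℕ) :
    ∫ x in Ioo 0 1, recg k n x ^ 2 =
      (k : ℝ) ^ (2 * (n + 1)) * (2 * n)! / ((n ! : ℝ) ^ 2 * (2 * k - 1) ^ (2 * n + 1)) := by
  simp_rw [recg_sq_eq_mul]
  have hcast : ((2 * (k - 1) : ℕ) : ℝ) + 1 = 2 * k - 1 := by
    rw [Nat.cast_mul, Nat.cast_pred hk]; ring
  have hk' : (0 : ℝ) < 2 * k - 1 := by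
    have : (1 : ℝ) ≤ k := by exact_mod_cast hk
    linarith
  rw [integral_const_mul, integral_neg_log_one_sub_pow_mul_one_sub_pow, hcast]
  field_simp
  ring

theorem stmt3 (k n : ℕ) (hk : 1 ≤ k) :
    ∫ x in (0:ℝ)..1, (recg k n x - 1) ^ 2 =
      (k : ℝ) ^ (2 * (n + 1)) * (Nat.factorial (2 * n)) /
        ((Nat.factorial n : ℝ) ^ 2 * (2 * (k : ℝ) - 1) ^ (2 * n + 1)) - 1 := by
  have : IsProbabilityMeasure (volume.restrict (Ioo (0 : ℝ) 1)) := ⟨by simp⟩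
  rw [intervalIntegral.integral_of_le zero_le_one, integral_Ioc_eq_integral_Ioo,
    integral_sub_one_sq (integrableOn_recg k n) (integrableOn_recg_sq k n),
    integral_recg hk, integral_recg_sq hk]
  ring
end

section
/- Let α ≠ 0 and ĝ_n^{(k)} = g_n^{(k)} ∘ W_α as above. For integers k ≥ 2 and n ≥ 2 and x in the interior of the support of W_α, the second derivative satisfies (ĝ_n^{(k)})''(x) = (1/(1−αx)^2) · [k²·ĝ_{n−2}^{(k)}(x) − k(2k−α−2)·ĝ_{n−1}^{(k)}(x) + (k−1)(k−1−α)·ĝ_n^{(k)}(x)]. -/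
open MeasureTheory Real

/-- The generalized Pareto distribution function (α ≠ 0). -/
noncomputable def Wgpd (α : ℝ) (x : ℝ) : ℝ := 1 - (1 - α * x) ^ (1 / α)

/-- The uniform k-th record density composed with the generalized Pareto cdf. -/
noncomputable def ghat (α : ℝ) (k n : ℕ) (x : ℝ) : ℝ := recg k n (Wgpd α x)

/-!
In the time variable `t = -(1/α) log (1 - α x)` one has `1 - W_α(x) = exp (-t)`, so
`ĝ_m^{(k)}(x) = k^{m+1}/m! · t^m · exp (-(k-1) t)`. In `t` these functions satisfy
`∂ₜ ĝ_{m+1} = k ĝ_m - (k-1) ĝ_{m+1}`, and `dt/dx = 1/(1 - α x)`, whose derivative is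
`α/(1 - α x)^2`. Differentiating the first-order relation once more gives the formula.
-/

noncomputable def recordCurve (k m : ℕ) (t : ℝ) : ℝ :=
  (k : ℝ) ^ (m + 1) / m.factorial * t ^ m * exp (-((k : ℝ) - 1) * t)

noncomputable def paretoTime (α x : ℝ) : ℝ := -(1 / α * log (1 - α * x))

lemma recg_one_sub_exp_neg {k : ℕ} (hk : 1 ≤ k) (m : ℕ) (t : ℝ) :
    recg k m (1 - exp (-t)) = recordCurve k m t := by
  rw [recg, recordCurve, sub_sub_cancel, log_exp, neg_neg, ← exp_nat_mul]
  congr 2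
  push_cast [hk]
  ring

lemma hasDerivAt_recordCurve_succ (k m : ℕ) (t : ℝ) :
    HasDerivAt (recordCurve k (m + 1))
      ((k : ℝ) * recordCurve k m t - ((k : ℝ) - 1) * recordCurve k (m + 1) t) t := by
  have hexp : HasDerivAt (fun s => exp (-((k : ℝ) - 1) * s))
      (exp (-((k : ℝ) - 1) * t) * -((k : ℝ) - 1)) t := by
    simpa using ((hasDerivAt_id t).const_mul (-((k : ℝ) - 1))).exp
  have h : HasDerivAt (recordCurve k (m + 1)) _ t :=
    ((hasDerivAt_pow (m + 1) t).const_mul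
      ((k : ℝ) ^ (m + 1 + 1) / (m + 1).factorial)).fun_mul hexp
  refine h.congr_deriv ?_
  simp only [recordCurve, Nat.factorial_succ, Nat.cast_mul, Nat.add_sub_cancel]
  field_simp
  push_cast
  ring

lemma Wgpd_eq_one_sub_exp_neg_paretoTime {α x : ℝ} (hx : 0 < 1 - α * x) :
    Wgpd α x = 1 - exp (-paretoTime α x) := by
  rw [Wgpd, paretoTime, neg_neg, rpow_def_of_pos hx, mul_comm]

lemma hasDerivAt_one_sub_mul (α x : ℝ) : HasDerivAt (fun y => 1 - α * y) (-α) x := by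
  simpa using ((hasDerivAt_id x).const_mul α).const_sub 1

lemma hasDerivAt_paretoTime {α x : ℝ} (hα : α ≠ 0) (hx : 0 < 1 - α * x) :
    HasDerivAt (paretoTime α) (1 / (1 - α * x)) x := by
  have h : HasDerivAt (paretoTime α) _ x :=
    (((hasDerivAt_one_sub_mul α x).log hx.ne').const_mul (1 / α)).neg
  refine h.congr_deriv ?_
  field_simp

lemma eventually_nhds_one_sub_mul_pos {α x : ℝ} (hx : 0 < 1 - α * x) :
    ∀ᶠ y in nhds x, 0 < 1 - α * y :=
  (isOpen_lt continuous_const (by fun_prop)).mem_nhds hx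

lemma ghat_eq_recordCurve_paretoTime (α : ℝ) {k : ℕ} (hk : 1 ≤ k) (m : ℕ) {x : ℝ}
    (hx : 0 < 1 - α * x) : ghat α k m x = recordCurve k m (paretoTime α x) := by
  rw [ghat, Wgpd_eq_one_sub_exp_neg_paretoTime hx, recg_one_sub_exp_neg hk]

lemma hasDerivAt_ghat_succ {α : ℝ} (hα : α ≠ 0) {k : ℕ} (hk : 1 ≤ k) (m : ℕ) {x : ℝ}
    (hx : 0 < 1 - α * x) :
    HasDerivAt (ghat α k (m + 1))
      (1 / (1 - α * x) * ((k : ℝ) * ghat α k m x - ((k : ℝ) - 1) * ghat α k (m + 1) x)) x := by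
  have hcomp := (hasDerivAt_recordCurve_succ k m (paretoTime α x)).comp x
    (hasDerivAt_paretoTime hα hx)
  rw [ghat_eq_recordCurve_paretoTime α hk m hx, ghat_eq_recordCurve_paretoTime α hk (m + 1) hx,
    mul_comm]
  exact hcomp.congr_of_eventuallyEq <| (eventually_nhds_one_sub_mul_pos hx).mono fun y hy =>
    ghat_eq_recordCurve_paretoTime α hk (m + 1) hy

theorem stmt6_general (α : ℝ) (hα : α ≠ 0) (k n : ℕ) (hk : 2 ≤ k) (hn : 2 ≤ n)
    (x : ℝ) (hx' : 0 < 1 - α * x) :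
    HasDerivAt (deriv (ghat α k n))
      ((1 / (1 - α * x) ^ 2) *
        ((k : ℝ) ^ 2 * ghat α k (n - 2) x
          - (k : ℝ) * (2 * (k : ℝ) - α - 2) * ghat α k (n - 1) x
          + ((k : ℝ) - 1) * ((k : ℝ) - 1 - α) * ghat α k n x)) x := by
  obtain ⟨m, rfl⟩ : ∃ m, n = m + 2 := ⟨n - 2, by omega⟩
  rw [Nat.add_sub_cancel, show m + 2 - 1 = m + 1 from rfl]
  have hk1 : 1 ≤ k := by omega
  have hderiv : deriv (ghat α k (m + 2)) =ᶠ[nhds x] fun y => 1 / (1 - α * y) *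
      ((k : ℝ) * ghat α k (m + 1) y - ((k : ℝ) - 1) * ghat α k (m + 2) y) :=
    (eventually_nhds_one_sub_mul_pos hx').mono fun y hy =>
      (hasDerivAt_ghat_succ hα hk1 (m + 1) hy).deriv
  have hD : HasDerivAt (fun y => 1 / (1 - α * y) *
      ((k : ℝ) * ghat α k (m + 1) y - ((k : ℝ) - 1) * ghat α k (m + 2) y)) _ x :=
    ((hasDerivAt_const x (1 : ℝ)).div (hasDerivAt_one_sub_mul α x) hx'.ne').mul
      (((hasDerivAt_ghat_succ hα hk1 m hx').const_mul (k : ℝ)).sub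
        ((hasDerivAt_ghat_succ hα hk1 (m + 1) hx').const_mul ((k : ℝ) - 1)))
  refine (hD.congr_deriv ?_).congr_of_eventuallyEq hderiv
  simp only [Pi.div_apply]
  field_simp
  ring

theorem stmt6 (α : ℝ) (hα : α ≠ 0) (k n : ℕ) (hk : 2 ≤ k) (hn : 2 ≤ n)
    (x : ℝ) (hx : 0 < x) (hx' : 0 < 1 - α * x) :
    HasDerivAt (deriv (ghat α k n))
      ((1 / (1 - α * x) ^ 2) *
        ((k : ℝ) ^ 2 * ghat α k (n - 2) x
          - (k : ℝ) * (2 * (k : ℝ) - α - 2) * ghat α k (n - 1) x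
          + ((k : ℝ) - 1) * ((k : ℝ) - 1 - α) * ghat α k n x)) x :=
  stmt6_general α hα k n hk hn x hx'
end
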